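/- The total ultimate rank R_n of the semigroup P_n of partial automorphisms of the n-level binary rooted tree satisfies R_n ≤ 3 R_{n-1} + 3 R_{n-1} N_{n-1} for all n ≥ 2, where N_{n-1} = |P_{n-1}|. -/

import Mathlib

open scoped BigOperators

/-- A partial automorphism of the `n`-level binary rooted tree.  Vertices of the tree are
encoded as binary strings of length at most `n`: the root is the empty string and the two
children of a vertex `l` are `l ++ [b]` for `b : Bool`.  A partial automorphism is an
injective partial map (with `none` standing for "undefined") whose domain is a subtree
containing the root, which fixes the root and maps children of a vertex in its domain to
children of its image; equivalently, it is an isomorphism between two subtrees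
containing the root. -/
structure PartialAut (n : ℕ) where
  toFun : List Bool → Option (List Bool)
  length_le : ∀ l m, toFun l = some m → l.length ≤ n
  root_map : toFun [] = some []
  child_map : ∀ l b m, toFun (l ++ [b]) = some m →
      ∃ u b', toFun l = some u ∧ m = u ++ [b']
  inj : ∀ l l' m, toFun l = some m → toFun l' = some m → l = l'

namespace PartialAut

variable {n : ℕ}

theorem ext' {x y : PartialAut n} (h : x.toFun = y.toFun) : x = y := by
  cases x; cases y; cases h; rfl

theorem toFun_eq_none {x : PartialAut n} {l : List Bool} (h : ¬ l.length ≤ n) :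
    x.toFun l = none := by
  cases hx : x.toFun l with
  | none => rfl
  | some m => exact absurd (x.length_le l m hx) h

theorem length_map {x : PartialAut n} : ∀ l m : List Bool, x.toFun l = some m →
    m.length = l.length := by
  intro l
  induction l using List.reverseRecOn with
  | nil => intro m h; rw [x.root_map] at h; cases h; rfl
  | append_singleton l b ih =>
      intro m h
      obtain ⟨u, b', hu, rfl⟩ := x.child_map l b m h
      simp [ih u hu]

/-- Composition of partial automorphisms (first apply `x`, then `y`), together with the
identity automorphism, makes `PartialAut n` a monoid (in particular a semigroup). -/
instance : Monoid (PartialAut n) where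
  mul x y :=
    { toFun := fun l => (x.toFun l).bind y.toFun
      length_le := by
        intro l m h
        try dsimp only at h
        cases hx : x.toFun l with
        | none => rw [hx] at h; cases h
        | some k => exact x.length_le l k hx
      root_map := by try dsimp only
                     rw [x.root_map]; simpa using y.root_map
      child_map := by
        intro l b m h
        try dsimp only at h ⊢
        cases hx : x.toFun (l ++ [b]) with
        | none => rw [hx] at h; cases h
        | some k =>
          rw [hx, Option.bind_some] at h
          obtain ⟨u, b', hu, rfl⟩ := x.child_map l b k hx
          obtain ⟨w, b'', hw, rfl⟩ := y.child_map u b' m h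
          exact ⟨w, b'', by rw [hu, Option.bind_some, hw], rfl⟩
      inj := by
        intro l l' m h h'
        try dsimp only at h h'
        cases hx : x.toFun l with
        | none => rw [hx] at h; cases h
        | some k =>
          cases hx' : x.toFun l' with
          | none => rw [hx'] at h'; cases h'
          | some k' =>
            rw [hx, Option.bind_some] at h
            rw [hx', Option.bind_some] at h'
            have hkk : k = k' := y.inj k k' m h h'
            subst hkk
            exact x.inj l l' k hx hx' }
  one :=
    { toFun := fun l => if l.length ≤ n then some l else none
      length_le := by
        intro l m h
        try dsimp only at h
        split at h
        · assumption
        · cases h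
      root_map := by simp
      child_map := by
        intro l b m h
        try dsimp only at h ⊢
        split at h
        · cases h
          have hl : l.length ≤ n := by
            simp only [List.length_append, List.length_cons, List.length_nil] at *
            omega
          exact ⟨l, b, by simp [hl], rfl⟩
        · cases h
      inj := by
        intro l l' m h h'
        try dsimp only at h h'
        split at h
        · cases h
          split at h'
          · cases h'; rfl
          · cases h'
        · cases h }
  mul_assoc x y z := ext' (funext fun l => Option.bind_assoc _ _ _)
  one_mul x := by
    apply ext'
    funext l
    by_cases hl : l.length ≤ n
    · show (if l.length ≤ n then some l else none).bind x.toFun = x.toFun l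
      simp [hl]
    · show (if l.length ≤ n then some l else none).bind x.toFun = x.toFun l
      simp [hl, toFun_eq_none hl]
  mul_one x := by
    apply ext'
    funext l
    show (x.toFun l).bind (fun m => if m.length ≤ n then some m else none) = x.toFun l
    cases hx : x.toFun l with
    | none => rfl
    | some m =>
      have hm : m.length ≤ n := (length_map l m hx) ▸ x.length_le l m hx
      simp [hm]

@[simp] theorem mul_toFun (x y : PartialAut n) (l : List Bool) :
    (x * y).toFun l = (x.toFun l).bind y.toFun := rfl

@[simp] theorem one_toFun (l : List Bool) :
    (1 : PartialAut n).toFun l = if l.length ≤ n then some l else none := rfl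

instance : Finite (PartialAut n) := by
  haveI hV : Finite {l : List Bool // l.length ≤ n} := (List.finite_length_le Bool n).to_subtype
  haveI := Fintype.ofFinite {l : List Bool // l.length ≤ n}
  apply Finite.of_injective
    (fun (x : PartialAut n) (v : {l : List Bool // l.length ≤ n}) =>
      (x.toFun v.1).bind fun m => if hm : m.length ≤ n then
        some (⟨m, hm⟩ : {l : List Bool // l.length ≤ n}) else none)
  intro x y h
  apply ext'
  funext l
  by_cases hl : l.length ≤ n
  · have h' := congrFun h ⟨l, hl⟩
    try dsimp only at h'
    cases hx : x.toFun l with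
    | none =>
      cases hy : y.toFun l with
      | none => rfl
      | some m =>
        have hm : m.length ≤ n := (length_map l m hy) ▸ y.length_le l m hy
        rw [hx, hy] at h'
        simp [hm] at h'
    | some m =>
      have hm : m.length ≤ n := (length_map l m hx) ▸ x.length_le l m hx
      cases hy : y.toFun l with
      | none =>
        rw [hx, hy] at h'
        simp [hm] at h'
      | some k =>
        have hk : k.length ≤ n := (length_map l k hy) ▸ y.length_le l k hy
        rw [hx, hy] at h'
        simp only [Option.bind_some, hm, hk, dif_pos] at h'
        rw [Option.some_inj, Subtype.mk.injEq] at h'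
        rw [h']
  · rw [toFun_eq_none hl, toFun_eq_none hl]

noncomputable instance : Fintype (PartialAut n) := Fintype.ofFinite _

end PartialAut

/-- The set of vertices of the `n`-th (bottom) level of the `n`-level binary rooted tree. -/
def Leaf (n : ℕ) : Type := {l : List Bool // l.length = n}

instance (n : ℕ) : DecidableEq (Leaf n) := fun a b =>
  decidable_of_iff (a.1 = b.1) Subtype.ext_iff.symm

instance (n : ℕ) : Finite (Leaf n) := by
  have : Finite {l : List Bool // l.length = n} := (List.finite_length_eq Bool n).to_subtype
  exact this

noncomputable instance (n : ℕ) : Fintype (Leaf n) := Fintype.ofFinite _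

/-- The domain of a partial automorphism. -/
def PartialAut.dom {n : ℕ} (x : PartialAut n) : Set (List Bool) := {l | x.toFun l ≠ none}

/-- `N_n`, the number of elements of the semigroup `P_n`. -/
noncomputable def Nn (n : ℕ) : ℕ := Nat.card (PartialAut n)

/-- `S_n(x)`: the bottom-level vertices surviving all iterates of `x`. -/
def survSet {n : ℕ} (x : PartialAut n) : Set (List Bool) :=
  {l | l.length = n ∧ ∀ m : ℕ, 1 ≤ m → l ∈ (x ^ m).dom}

/-- The ultimate rank `rk_n(x) = |S_n(x)|`. -/
noncomputable def urk {n : ℕ} (x : PartialAut n) : ℕ := Nat.card (survSet x)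

/-- The total ultimate rank `R_n`. -/
noncomputable def Rn (n : ℕ) : ℕ := ∑ x : PartialAut n, urk x

/-- `rank_n(x) = |dom(x) ∩ B_n|`. -/
noncomputable def lrank {n : ℕ} (x : PartialAut n) : ℕ :=
  Nat.card {l : List Bool | l ∈ x.dom ∧ l.length = n}

/-- The total rank `R'_n`. -/
noncomputable def Rn' (n : ℕ) : ℕ := ∑ x : PartialAut n, lrank x

/-- The action matrix `A_x` of `x` on the bottom level of the tree. -/
noncomputable def actionMatrix {n : ℕ} (x : PartialAut n) : Matrix (Leaf n) (Leaf n) ℂ :=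
  fun i j => if x.toFun i.1 = some j.1 then 1 else 0

/-- The multiset of eigenvalues (with multiplicity) of the action matrix of `x`,
i.e. the roots of its characteristic polynomial. -/
noncomputable def eigenvalues {n : ℕ} (x : PartialAut n) : Multiset ℂ :=
  (actionMatrix x).charpoly.roots

/-- `∫_D f dΞ_n` for the empirical eigenvalue measure
`Ξ_n = 2^{-n} ∑_k δ_{λ_k}` of `x`. -/
noncomputable def specInt {n : ℕ} (x : PartialAut n) (f : ℂ → ℂ) : ℂ :=
  (2 ^ n : ℂ)⁻¹ * ((eigenvalues x).map f).sum

/-- `p_n = R_n / (2^n N_n)`. -/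
noncomputable def pn (n : ℕ) : ℝ := (Rn n : ℝ) / (2 ^ n * Nn n)

/-- The idempotent partial automorphism which is the identity on `dom x`. -/
def PartialAut.domIdem {n : ℕ} (x : PartialAut n) : PartialAut n where
  toFun l := if x.toFun l = none then none else some l
  length_le := by
    intro l m h
    try dsimp only at h
    split at h
    · cases h
    · next hx =>
      cases hk : x.toFun l with
      | none => exact absurd hk hx
      | some k => exact x.length_le l k hk
  root_map := by simp [x.root_map]
  child_map := by
    intro l b m h
    try dsimp only at h ⊢
    split at h
    · cases h
    · next hx =>
      cases h
      cases hk : x.toFun (l ++ [b]) with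
      | none => exact absurd hk hx
      | some k =>
        obtain ⟨u, b', hu, _⟩ := x.child_map l b k hk
        exact ⟨l, b, by simp [hu], rfl⟩
  inj := by
    intro l l' m h h'
    try dsimp only at h h'
    split at h
    · cases h
    · cases h
      split at h'
      · cases h'
      · cases h'; rfl

namespace PartialAut

variable {n : ℕ}

/-! ### Basic lemmas on powers and domains -/

theorem pow_succ_toFun (x : PartialAut n) (m : ℕ) (l : List Bool) :
    (x ^ (m + 1)).toFun l = ((x ^ m).toFun l).bind x.toFun := by
  rw [pow_succ]; rfl

theorem mul_none {x y : PartialAut n} {l : List Bool} (h : x.toFun l = none) :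
    (x * y).toFun l = none := by
  rw [mul_toFun, h]; rfl

theorem pow_none_mono (x : PartialAut n) {a b : ℕ} (hab : a ≤ b) {l : List Bool}
    (h : (x ^ a).toFun l = none) : (x ^ b).toFun l = none := by
  obtain ⟨c, rfl⟩ := Nat.exists_eq_add_of_le hab
  induction c with
  | zero => exact h
  | succ c ih =>
      rw [← Nat.add_assoc, pow_succ_toFun, ih (Nat.le_add_right a c)]
      rfl

theorem mem_dom_iff {x : PartialAut n} {l : List Bool} : l ∈ x.dom ↔ x.toFun l ≠ none :=
  Iff.rfl

theorem survSet_pow (x : PartialAut n) (j : ℕ) (hj : 1 ≤ j) :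
    survSet (x ^ j) = survSet x := by
  ext l
  constructor
  · rintro ⟨hlen, hdom⟩
    refine ⟨hlen, fun m hm => ?_⟩
    have h2 := hdom m hm
    rw [mem_dom_iff, ← pow_mul] at h2
    rw [mem_dom_iff]
    intro hc
    exact h2 (pow_none_mono x (Nat.le_mul_of_pos_left m hj) hc)
  · rintro ⟨hlen, hdom⟩
    refine ⟨hlen, fun m hm => ?_⟩
    have h2 := hdom (j * m) (le_trans hm (Nat.le_mul_of_pos_left m hj))
    rw [mem_dom_iff] at h2 ⊢
    rwa [pow_mul] at h2

theorem urk_eq_of_survSet_eq {x y : PartialAut n} (h : survSet x = survSet y) :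
    urk x = urk y := by
  unfold urk; rw [h]

theorem urk_mul_self (x : PartialAut n) : urk (x * x) = urk x := by
  apply urk_eq_of_survSet_eq
  rw [← pow_two]
  exact survSet_pow x 2 (by norm_num)

/-! ### Prefix and head lemmas -/

theorem prefix_map (x : PartialAut n) :
    ∀ (l' l w : List Bool), x.toFun (l ++ l') = some w →
      ∃ v u, x.toFun l = some v ∧ w = v ++ u := by
  intro l'
  induction l' using List.reverseRecOn with
  | nil =>
      intro l w h
      exact ⟨w, [], by simpa using h, by simp⟩
  | append_singleton l' b ih =>
      intro l w h
      rw [← List.append_assoc] at h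
      obtain ⟨p, b', hp, rfl⟩ := x.child_map _ b w h
      obtain ⟨v, u, hv, rfl⟩ := ih l p hp
      exact ⟨v, u ++ [b'], hv, by simp⟩

theorem head_map {x : PartialAut n} {c : Bool} {u w : List Bool}
    (h : x.toFun (c :: u) = some w) :
    ∃ d v, x.toFun [c] = some [d] ∧ w = d :: v := by
  obtain ⟨v, u', hv, rfl⟩ := x.prefix_map u [c] w h
  have hlen : v.length = 1 := by
    have := length_map (x := x) [c] v hv
    simpa using this
  obtain ⟨d, rfl⟩ : ∃ d, v = [d] := by
    match v, hlen with
    | [d], _ => exact ⟨d, rfl⟩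
  exact ⟨d, u', hv, rfl⟩

theorem dom_cons {x : PartialAut n} {c : Bool} {u : List Bool}
    (h : x.toFun [c] = none) : x.toFun (c :: u) = none := by
  cases hx : x.toFun (c :: u) with
  | none => rfl
  | some w =>
      obtain ⟨d, v, hd, _⟩ := head_map hx
      rw [h] at hd; cases hd

theorem val_one {x : PartialAut n} {c : Bool} {w : List Bool}
    (h : x.toFun [c] = some w) : ∃ d, w = [d] := by
  have hlen : w.length = 1 := by
    have := length_map (x := x) [c] w h
    simpa using this
  match w, hlen with
  | [d], _ => exact ⟨d, rfl⟩

end PartialAut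
namespace PartialAut

variable {n : ℕ}

/-! ### Restriction of a partial automorphism to a subtree -/

/-- The component of `x` mapping the subtree under child `c` to the subtree under `d`. -/
def restr (x : PartialAut (n + 1)) (c d : Bool) (h : x.toFun [c] = some [d]) :
    PartialAut n where
  toFun u := (x.toFun (c :: u)).map List.tail
  length_le := by
    intro u m hm
    try dsimp only at hm
    cases hx : x.toFun (c :: u) with
    | none => rw [hx] at hm; cases hm
    | some w =>
        have := x.length_le (c :: u) w hx
        simpa using this
  root_map := by
    try dsimp only
    have : (c :: ([] : List Bool)) = [c] := rfl
    rw [this, h]; rfl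
  child_map := by
    intro u b m hm
    try dsimp only at hm ⊢
    have hcons : (c :: (u ++ [b])) = (c :: u) ++ [b] := rfl
    rw [hcons] at hm
    cases hx : x.toFun ((c :: u) ++ [b]) with
    | none => rw [hx] at hm; cases hm
    | some w =>
        rw [hx] at hm
        obtain ⟨p, b', hp, rfl⟩ := x.child_map (c :: u) b w hx
        have hpne : p ≠ [] := by
          have := length_map (x := x) (c :: u) p hp
          intro hc; rw [hc] at this; simp at this
        refine ⟨p.tail, b', ?_, ?_⟩
        · show (x.toFun (c :: u)).map List.tail = some p.tail
          rw [hp]; rfl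
        · have : (p ++ [b']).tail = p.tail ++ [b'] := by
            cases p with
            | nil => exact absurd rfl hpne
            | cons a q => rfl
          simp only [Option.map_some, Option.some.injEq] at hm
          rw [← hm, this]
  inj := by
    intro u u' m hu hu'
    try dsimp only at hu hu'
    cases hx : x.toFun (c :: u) with
    | none => rw [hx] at hu; cases hu
    | some w =>
        cases hx' : x.toFun (c :: u') with
        | none => rw [hx'] at hu'; cases hu'
        | some w' =>
            rw [hx] at hu; rw [hx'] at hu'
            simp only [Option.map_some] at hu hu'
            obtain ⟨e, v, he, rfl⟩ := head_map hx
            obtain ⟨e', v', he', rfl⟩ := head_map hx'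
            rw [h] at he he'
            cases he; cases he'
            have hvm : v = m := by simpa using hu
            have hvm' : v' = m := by simpa using hu'
            have hcc := x.inj (c :: u) (c :: u') (d :: m)
              (by rw [hx, hvm]) (by rw [hx', hvm'])
            simpa using hcc

@[simp] theorem restr_toFun (x : PartialAut (n + 1)) (c d : Bool)
    (h : x.toFun [c] = some [d]) (u : List Bool) :
    (restr x c d h).toFun u = (x.toFun (c :: u)).map List.tail := rfl

theorem restr_toFun_eq_none_iff (x : PartialAut (n + 1)) (c d : Bool)
    (h : x.toFun [c] = some [d]) (u : List Bool) :
    (restr x c d h).toFun u = none ↔ x.toFun (c :: u) = none := by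
  rw [restr_toFun, Option.map_eq_none_iff]

theorem mul_child {x y : PartialAut (n + 1)} {c d e : Bool}
    (hx : x.toFun [c] = some [d]) (hy : y.toFun [d] = some [e]) :
    (x * y).toFun [c] = some [e] := by
  rw [mul_toFun, hx, Option.bind_some, hy]

theorem restr_mul {x y : PartialAut (n + 1)} {c d e : Bool}
    (hx : x.toFun [c] = some [d]) (hy : y.toFun [d] = some [e]) :
    restr (x * y) c e (mul_child hx hy) = restr x c d hx * restr y d e hy := by
  apply ext'
  funext u
  show ((x.toFun (c :: u)).bind y.toFun).map List.tail
      = ((x.toFun (c :: u)).map List.tail).bind fun v => (y.toFun (d :: v)).map List.tail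
  cases hxc : x.toFun (c :: u) with
  | none => rfl
  | some w =>
      obtain ⟨d', v, hd', rfl⟩ := head_map hxc
      rw [hx] at hd'; cases hd'
      rfl

theorem pow_child {x : PartialAut (n + 1)} {c : Bool} (h : x.toFun [c] = some [c]) :
    ∀ m : ℕ, (x ^ m).toFun [c] = some [c]
  | 0 => by simp
  | m + 1 => by
      rw [pow_succ_toFun, pow_child h m, Option.bind_some, h]

theorem restr_one (c : Bool) :
    restr (1 : PartialAut (n + 1)) c c (by simp) = 1 := by
  apply ext'
  funext u
  show ((1 : PartialAut (n+1)).toFun (c :: u)).map List.tail = (1 : PartialAut n).toFun u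
  simp only [one_toFun]
  by_cases hu : u.length ≤ n
  · have h1 : (c :: u).length ≤ n + 1 := by simpa using hu
    rw [if_pos h1, if_pos hu]; rfl
  · have h1 : ¬ (c :: u).length ≤ n + 1 := by simpa using hu
    rw [if_neg h1, if_neg hu]; rfl

theorem restr_congr {x y : PartialAut (n + 1)} (hxy : x = y) {c d : Bool}
    (h1 : x.toFun [c] = some [d]) (h2 : y.toFun [c] = some [d]) :
    restr x c d h1 = restr y c d h2 := by subst hxy; rfl

theorem restr_pow {x : PartialAut (n + 1)} {c : Bool} (h : x.toFun [c] = some [c]) :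
    ∀ m : ℕ, restr (x ^ m) c c (pow_child h m) = (restr x c c h) ^ m
  | 0 => by
      refine (restr_congr (pow_zero x) _ (by simp)).trans ?_
      rw [restr_one, pow_zero]
  | m + 1 => by
      refine (restr_congr (pow_succ x m) _
        (mul_child (pow_child h m) h)).trans ?_
      rw [restr_mul (pow_child h m) h, restr_pow h m, pow_succ]

theorem mem_survSet_cons {x : PartialAut (n + 1)} {c : Bool}
    (h : x.toFun [c] = some [c]) (u : List Bool) :
    (c :: u) ∈ survSet x ↔ u ∈ survSet (restr x c c h) := by
  constructor
  · rintro ⟨hlen, hdom⟩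
    refine ⟨by simpa using hlen, fun m hm => ?_⟩
    have hdm := hdom m hm
    rw [mem_dom_iff] at hdm ⊢
    rw [← restr_pow h m]
    intro hc
    rw [restr_toFun] at hc
    exact hdm (Option.map_eq_none_iff.mp hc)
  · rintro ⟨hlen, hdom⟩
    refine ⟨by simpa using hlen, fun m hm => ?_⟩
    have h2 := hdom m hm
    rw [mem_dom_iff] at h2 ⊢
    intro hc
    apply h2
    rw [← restr_pow h m, restr_toFun, hc]
    rfl

end PartialAut
namespace PartialAut

variable {n : ℕ}

/-! ### Splitting the ultimate rank by the two subtrees -/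

theorem survSet_mul_self (x : PartialAut n) : survSet (x * x) = survSet x := by
  rw [← pow_two]; exact survSet_pow x 2 (by norm_num)

/-- Two-argument payoff: value of `F` at the component of `x` from child `c` to `d`. -/
noncomputable def payoff (x : PartialAut (n + 1)) (c d : Bool) (F : PartialAut n → ℕ) : ℕ :=
  if h : x.toFun [c] = some [d] then F (restr x c d h) else 0

noncomputable def payoff2 (x : PartialAut (n + 1)) (c d : Bool)
    (F : PartialAut n → PartialAut n → ℕ) : ℕ :=
  if h : x.toFun [c] = some [d] ∧ x.toFun [!c] = some [!d] then
    F (restr x c d h.1) (restr x (!c) (!d) h.2) else 0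

/-- The `c`-part of the survivor set. -/
def survPart (x : PartialAut (n + 1)) (c : Bool) : Set (List Bool) :=
  {l | l ∈ survSet x ∧ l.head? = some c}

theorem survSet_finite (x : PartialAut n) : (survSet x).Finite := by
  apply Set.Finite.subset (List.finite_length_eq Bool n)
  intro l hl
  exact hl.1

theorem survPart_finite (x : PartialAut (n + 1)) (c : Bool) : (survPart x c).Finite :=
  (survSet_finite x).subset fun l hl => hl.1

theorem survSet_eq_union (x : PartialAut (n + 1)) :
    survSet x = survPart x false ∪ survPart x true := by
  ext l
  constructor
  · intro hl
    have hlen : l.length = n + 1 := hl.1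
    cases l with
    | nil => simp at hlen
    | cons c u =>
        cases c with
        | false => exact Or.inl ⟨hl, rfl⟩
        | true => exact Or.inr ⟨hl, rfl⟩
  · rintro (⟨h, _⟩ | ⟨h, _⟩) <;> exact h

theorem urk_eq_survParts (x : PartialAut (n + 1)) :
    urk x = Nat.card (survPart x false) + Nat.card (survPart x true) := by
  have hdisj : Disjoint (survPart x false) (survPart x true) := by
    rw [Set.disjoint_left]
    rintro l ⟨_, hf⟩ ⟨_, ht⟩
    rw [hf] at ht; cases ht
  have := Set.ncard_union_eq hdisj (survPart_finite x false) (survPart_finite x true)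
  unfold urk
  rw [Nat.card_coe_set_eq, Nat.card_coe_set_eq, Nat.card_coe_set_eq,
    survSet_eq_union x, this]

theorem survPart_eq_image {x : PartialAut (n + 1)} {c : Bool}
    (h : x.toFun [c] = some [c]) :
    survPart x c = (fun u => c :: u) '' survSet (restr x c c h) := by
  ext l
  constructor
  · rintro ⟨hs, hh⟩
    cases l with
    | nil => cases hh
    | cons c' u =>
        have : c' = c := by simpa using hh
        subst this
        exact ⟨u, (mem_survSet_cons h u).mp hs, rfl⟩
  · rintro ⟨u, hu, rfl⟩
    exact ⟨(mem_survSet_cons h u).mpr hu, rfl⟩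

theorem cardA_eq {x : PartialAut (n + 1)} {c : Bool} (h : x.toFun [c] = some [c]) :
    Nat.card (survPart x c) = urk (restr x c c h) := by
  unfold urk
  rw [Nat.card_coe_set_eq, Nat.card_coe_set_eq, survPart_eq_image h,
    Set.ncard_image_of_injective _ (fun u v huv => by simpa using huv)]

theorem restr_indep {x : PartialAut (n + 1)} {c d d' : Bool}
    (h : x.toFun [c] = some [d]) (h' : x.toFun [c] = some [d']) :
    restr x c d h = restr x c d' h' := ext' rfl

theorem survPart_empty_of_none {x : PartialAut (n + 1)} {c : Bool}
    (h : x.toFun [c] = none) : survPart x c = ∅ := by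
  ext l
  simp only [Set.mem_empty_iff_false, iff_false]
  rintro ⟨hs, hh⟩
  cases l with
  | nil => cases hh
  | cons c' u =>
      have : c' = c := by simpa using hh
      subst this
      have h1 := hs.2 1 le_rfl
      rw [mem_dom_iff, pow_one] at h1
      exact h1 (dom_cons h)

theorem survPart_card_zero_of_none {x : PartialAut (n + 1)} {c : Bool}
    (h : x.toFun [c] = none) : Nat.card (survPart x c) = 0 := by
  rw [survPart_empty_of_none h]
  simp

/-- Head-splitting of the survivor count for a single child. -/
theorem survPart_card_eq (x : PartialAut (n + 1)) (c : Bool) :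
    Nat.card (survPart x c)
      = payoff x c c urk + payoff2 x c (!c) (fun p q => urk (p * q)) := by
  cases hc : x.toFun [c] with
  | none =>
      rw [survPart_card_zero_of_none hc]
      unfold payoff payoff2
      rw [dif_neg (by rw [hc]; intro hcon; cases hcon),
        dif_neg (by rintro ⟨h1, _⟩; rw [hc] at h1; cases h1)]
  | some w =>
      obtain ⟨d, rfl⟩ := val_one hc
      by_cases hdc : d = c
      · subst hdc
        unfold payoff payoff2
        rw [dif_pos hc, dif_neg (by
          rintro ⟨h1, _⟩
          rw [hc] at h1
          have : d = !d := by simpa using h1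
          simp at this)]
        rw [cardA_eq hc]
        exact (Nat.add_zero _).symm
      · have hd : d = !c := by
          cases d <;> cases c <;> simp_all
        subst hd
        cases hc2 : x.toFun [!c] with
        | none =>
            unfold payoff payoff2
            rw [dif_neg (by rw [hc]; simp), dif_neg (by rintro ⟨_, h2⟩; rw [hc2] at h2; cases h2)]
            -- survivors under c are empty: x*x is undefined on c-subtree
            have hempty : survPart x c = ∅ := by
              ext l
              simp only [Set.mem_empty_iff_false, iff_false]
              rintro ⟨hs, hh⟩
              cases l with
              | nil => cases hh
              | cons c' u =>
                  have hcc : c = c' := by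
                    have h0 : c' = c := by simpa using hh
                    exact h0.symm
                  subst hcc
                  have h2 := hs.2 2 (by norm_num)
                  rw [mem_dom_iff, pow_two, mul_toFun] at h2
                  apply h2
                  cases hxc : x.toFun (c :: u) with
                  | none => rfl
                  | some w =>
                      obtain ⟨d', v, hd', rfl⟩ := head_map hxc
                      rw [hc] at hd'
                      have hdd : d' = !c := by
                        have h0 : [d'] = [!c] := by
                          exact Option.some.inj hd'.symm
                        simpa using h0
                      subst hdd
                      rw [Option.bind_some]
                      exact dom_cons hc2
            rw [hempty]; simp
        | some w2 =>
            obtain ⟨e, rfl⟩ := val_one hc2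
            have he : c = e := by
              by_contra hec
              have heq : e = !c := by cases e <;> cases c <;> simp_all
              subst heq
              have := x.inj [c] [!c] [!c] hc hc2
              simp at this
            subst he
            have hc2' : x.toFun [!c] = some [!(!c)] := by
              rw [hc2, Bool.not_not]
            unfold payoff payoff2
            rw [dif_neg (by rw [hc]; simp), dif_pos ⟨hc, hc2'⟩]
            -- use x * x which fixes child c
            have hfix : (x * x).toFun [c] = some [c] := mul_child hc hc2
            have hsp : survPart x c = survPart (x * x) c := by
              unfold survPart
              rw [survSet_mul_self]
            rw [hsp, cardA_eq hfix, restr_mul hc hc2]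
            show urk (restr x c (!c) hc * restr x (!c) c hc2)
              = 0 + urk (restr x c (!c) hc * restr x (!c) (!(!c)) hc2')
            rw [Nat.zero_add, restr_indep hc2' hc2]

theorem urk_split (x : PartialAut (n + 1)) :
    urk x = (payoff x false false urk + payoff2 x false true (fun p q => urk (p * q)))
      + (payoff x true true urk + payoff2 x true false (fun p q => urk (p * q))) := by
  rw [urk_eq_survParts x, survPart_card_eq x false, survPart_card_eq x true]
  rfl

end PartialAut
namespace PartialAut

variable {n : ℕ}

/-! ### Constructors for partial automorphisms of the `n+1`-level tree -/

def mk0Fun : List Bool → Option (List Bool)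
  | [] => some []
  | _ :: _ => none

@[simp] theorem mk0Fun_nil : mk0Fun [] = some [] := rfl
@[simp] theorem mk0Fun_cons (c : Bool) (u : List Bool) : mk0Fun (c :: u) = none := rfl

def mk1Fun (d e : Bool) (z : PartialAut n) : List Bool → Option (List Bool)
  | [] => some []
  | c :: u => if c = d then (z.toFun u).map (e :: ·) else none

@[simp] theorem mk1Fun_nil (d e : Bool) (z : PartialAut n) : mk1Fun d e z [] = some [] := rfl
@[simp] theorem mk1Fun_cons (d e : Bool) (z : PartialAut n) (c : Bool) (u : List Bool) :
    mk1Fun d e z (c :: u) = if c = d then (z.toFun u).map (e :: ·) else none := rfl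

def mk2Fun (s : Bool) (z w : PartialAut n) : List Bool → Option (List Bool)
  | [] => some []
  | c :: u => ((cond c w z).toFun u).map (fun v => xor c s :: v)

@[simp] theorem mk2Fun_nil (s : Bool) (z w : PartialAut n) : mk2Fun s z w [] = some [] := rfl
@[simp] theorem mk2Fun_cons (s : Bool) (z w : PartialAut n) (c : Bool) (u : List Bool) :
    mk2Fun s z w (c :: u) = ((cond c w z).toFun u).map (fun v => xor c s :: v) := rfl

/-- The trivial partial automorphism (domain is just the root). -/
def mk0 : PartialAut (n + 1) where
  toFun := mk0Fun
  length_le := by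
    intro l m h
    cases l with
    | nil => simp
    | cons c u => simp at h
  root_map := rfl
  child_map := by
    intro l b m h
    cases l with
    | nil => simp at h
    | cons c u => simp [List.cons_append] at h
  inj := by
    intro l l' m h h'
    cases l with
    | nil =>
        cases l' with
        | nil => rfl
        | cons c u => simp at h'
    | cons c u => simp at h

/-- Partial automorphism with top map `d ↦ e` only, with component `z`. -/
def mk1 (d e : Bool) (z : PartialAut n) : PartialAut (n + 1) where
  toFun := mk1Fun d e z
  length_le := by
    intro l m h
    cases l with
    | nil => simp
    | cons c u =>
        simp only [mk1Fun_cons] at h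
        split at h
        · cases hz : z.toFun u with
          | none => rw [hz] at h; cases h
          | some v =>
              have := z.length_le u v hz
              simpa using this
        · cases h
  root_map := rfl
  child_map := by
    intro l b m h
    cases l with
    | nil =>
        rw [List.nil_append, show (([b] : List Bool) = b :: []) from rfl, mk1Fun_cons] at h
        split at h
        · rw [z.root_map] at h
          simp only [Option.map_some, Option.some.injEq] at h
          exact ⟨[], e, rfl, by rw [← h]; rfl⟩
        · cases h
    | cons c u =>
        rw [List.cons_append, mk1Fun_cons] at h
        split at h
        · cases hz : z.toFun (u ++ [b]) with
          | none => rw [hz] at h; cases h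
          | some v =>
              rw [hz] at h
              simp only [Option.map_some, Option.some.injEq] at h
              obtain ⟨p, b', hp, rfl⟩ := z.child_map u b v hz
              refine ⟨e :: p, b', ?_, by rw [← h]; rfl⟩
              rw [mk1Fun_cons, if_pos (by assumption), hp]
              rfl
        · cases h
  inj := by
    intro l l' m h h'
    cases l with
    | nil =>
        cases l' with
        | nil => rfl
        | cons c' u' =>
            cases h
            rw [mk1Fun_cons] at h'
            split at h'
            · cases hz : z.toFun u' with
              | none => rw [hz] at h'; cases h'
              | some v => rw [hz] at h'; cases h'
            · cases h'
    | cons c u =>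
        cases l' with
        | nil =>
            cases h'
            rw [mk1Fun_cons] at h
            split at h
            · cases hz : z.toFun u with
              | none => rw [hz] at h; cases h
              | some v => rw [hz] at h; cases h
            · cases h
        | cons c' u' =>
            rw [mk1Fun_cons] at h h'
            split at h
            · split at h'
              · cases hz : z.toFun u with
                | none => rw [hz] at h; cases h
                | some v =>
                    cases hz' : z.toFun u' with
                    | none => rw [hz'] at h'; cases h'
                    | some v' =>
                        rw [hz] at h; rw [hz'] at h'
                        simp only [Option.map_some, Option.some.injEq] at h h'
                        have hvv : v = v' := by
                          have := h.trans h'.symm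
                          simpa using this
                        subst hvv
                        have := z.inj u u' v hz hz'
                        simp_all
              · cases h'
            · cases h

/-- Partial automorphism defined on both subtrees; `s = false` preserves the two
subtrees, `s = true` swaps them.  Component at child `c` is `cond c w z`. -/
def mk2 (s : Bool) (z w : PartialAut n) : PartialAut (n + 1) where
  toFun := mk2Fun s z w
  length_le := by
    intro l m h
    cases l with
    | nil => simp
    | cons c u =>
        simp only [mk2Fun_cons] at h
        cases hz : (cond c w z).toFun u with
        | none => rw [hz] at h; cases h
        | some v =>
            have := (cond c w z).length_le u v hz
            simpa using this
  root_map := rfl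
  child_map := by
    intro l b m h
    cases l with
    | nil =>
        rw [List.nil_append, show (([b] : List Bool) = b :: []) from rfl, mk2Fun_cons,
          (cond b w z).root_map] at h
        simp only [Option.map_some, Option.some.injEq] at h
        exact ⟨[], xor b s, rfl, by rw [← h]; rfl⟩
    | cons c u =>
        rw [List.cons_append, mk2Fun_cons] at h
        cases hz : (cond c w z).toFun (u ++ [b]) with
        | none => rw [hz] at h; cases h
        | some v =>
            rw [hz] at h
            simp only [Option.map_some, Option.some.injEq] at h
            obtain ⟨p, b', hp, rfl⟩ := (cond c w z).child_map u b v hz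
            refine ⟨xor c s :: p, b', ?_, by rw [← h]; rfl⟩
            rw [mk2Fun_cons, hp]
            rfl
  inj := by
    intro l l' m h h'
    cases l with
    | nil =>
        cases l' with
        | nil => rfl
        | cons c' u' =>
            cases h
            rw [mk2Fun_cons] at h'
            cases hz : (cond c' w z).toFun u' with
            | none => rw [hz] at h'; cases h'
            | some v => rw [hz] at h'; cases h'
    | cons c u =>
        cases l' with
        | nil =>
            cases h'
            rw [mk2Fun_cons] at h
            cases hz : (cond c w z).toFun u with
            | none => rw [hz] at h; cases h
            | some v => rw [hz] at h; cases h
        | cons c' u' =>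
            rw [mk2Fun_cons] at h h'
            cases hz : (cond c w z).toFun u with
            | none => rw [hz] at h; cases h
            | some v =>
                cases hz' : (cond c' w z).toFun u' with
                | none => rw [hz'] at h'; cases h'
                | some v' =>
                    rw [hz] at h; rw [hz'] at h'
                    simp only [Option.map_some, Option.some.injEq] at h h'
                    have hcomb := h.trans h'.symm
                    have hcc : c = c' := by
                      have hx : xor c s = xor c' s := by
                        have := congrArg (fun t => t.headI) hcomb
                        simpa using this
                      cases c <;> cases c' <;> cases s <;> simp_all
                    subst hcc
                    have hvv : v = v' := by simpa using hcomb
                    subst hvv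
                    have := (cond c w z).inj u u' v hz hz'
                    simp_all

@[simp] theorem mk0_child (c : Bool) (u : List Bool) :
    (mk0 : PartialAut (n + 1)).toFun (c :: u) = none := rfl

@[simp] theorem mk1_child (d e : Bool) (z : PartialAut n) (c : Bool) (u : List Bool) :
    (mk1 d e z).toFun (c :: u) = if c = d then (z.toFun u).map (e :: ·) else none := rfl

@[simp] theorem mk2_child (s : Bool) (z w : PartialAut n) (c : Bool) (u : List Bool) :
    (mk2 s z w).toFun (c :: u) = ((cond c w z).toFun u).map (fun v => xor c s :: v) := rfl

theorem mk1_single (d e : Bool) (z : PartialAut n) (c : Bool) :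
    (mk1 d e z).toFun [c] = if c = d then some [e] else none := by
  rw [show ([c] : List Bool) = c :: [] from rfl, mk1_child]
  split
  · rw [z.root_map]; rfl
  · rfl

theorem mk2_single (s : Bool) (z w : PartialAut n) (c : Bool) :
    (mk2 s z w).toFun [c] = some [xor c s] := by
  rw [show ([c] : List Bool) = c :: [] from rfl, mk2_child, (cond c w z).root_map]
  rfl

theorem restr_mk1 (d e : Bool) (z : PartialAut n) (h : (mk1 d e z).toFun [d] = some [e]) :
    restr (mk1 d e z) d e h = z := by
  apply ext'
  funext u
  rw [restr_toFun, mk1_child, if_pos rfl]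
  cases hz : z.toFun u with
  | none => rfl
  | some v => rfl

theorem restr_mk2 (s : Bool) (z w : PartialAut n) (c d : Bool)
    (h : (mk2 s z w).toFun [c] = some [d]) :
    restr (mk2 s z w) c d h = cond c w z := by
  apply ext'
  funext u
  rw [restr_toFun, mk2_child]
  cases hz : (cond c w z).toFun u with
  | none => rfl
  | some v => rfl

end PartialAut
namespace PartialAut

variable {n : ℕ}

/-! ### The classification bijection -/

/-- Classification data for a partial automorphism of `T_{n+1}`. -/
abbrev TDec (n : ℕ) :=
  Unit ⊕ (Bool × Bool × PartialAut n) ⊕ (Bool × PartialAut n × PartialAut n)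

def assemble : TDec n → PartialAut (n + 1)
  | Sum.inl _ => mk0
  | Sum.inr (Sum.inl (d, e, z)) => mk1 d e z
  | Sum.inr (Sum.inr (s, z, w)) => mk2 s z w

theorem toFun_ext_children {x y : PartialAut (n + 1)}
    (h : ∀ c u, x.toFun (c :: u) = y.toFun (c :: u)) : x = y := by
  apply ext'
  funext l
  cases l with
  | nil => rw [x.root_map, y.root_map]
  | cons c u => exact h c u

theorem mk1_toFun_inj {d e d' e' : Bool} {z z' : PartialAut n}
    (h : mk1 d e z = mk1 d' e' z') : d = d' ∧ e = e' ∧ z = z' := by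
  have h1 := congrArg (fun t => t.toFun [d]) h
  try dsimp only at h1
  rw [mk1_single, mk1_single, if_pos rfl] at h1
  by_cases hdd : d = d'
  · subst hdd
    rw [if_pos rfl] at h1
    have hee : e = e' := by simpa using h1
    subst hee
    refine ⟨rfl, rfl, ?_⟩
    apply ext'
    funext u
    have h2 := congrArg (fun t => t.toFun (d :: u)) h
    simp only [mk1_child, if_pos rfl] at h2
    cases hz : z.toFun u with
    | none =>
        cases hz' : z'.toFun u with
        | none => rfl
        | some v => rw [hz, hz'] at h2; cases h2
    | some v =>
        cases hz' : z'.toFun u with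
        | none => rw [hz, hz'] at h2; cases h2
        | some v' =>
            rw [hz, hz'] at h2
            simp at h2
            rw [h2]
  · rw [if_neg hdd] at h1; cases h1

theorem mk2_toFun_inj {s s' : Bool} {z z' w w' : PartialAut n}
    (h : mk2 s z w = mk2 s' z' w') : s = s' ∧ z = z' ∧ w = w' := by
  have h1 := congrArg (fun t => t.toFun [false]) h
  try dsimp only at h1
  rw [mk2_single, mk2_single] at h1
  have hss : s = s' := by simpa using h1
  subst hss
  have hcomp : ∀ c : Bool, cond c w z = cond c w' z' := by
    intro c
    apply ext'
    funext u
    have h2 := congrArg (fun t => t.toFun (c :: u)) h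
    simp only [mk2_child] at h2
    cases hz : (cond c w z).toFun u with
    | none =>
        cases hz' : (cond c w' z').toFun u with
        | none => rfl
        | some v => rw [hz, hz'] at h2; cases h2
    | some v =>
        cases hz' : (cond c w' z').toFun u with
        | none => rw [hz, hz'] at h2; cases h2
        | some v' =>
            rw [hz, hz'] at h2
            simp at h2
            rw [h2]
  exact ⟨rfl, hcomp false, hcomp true⟩

theorem assemble_bijective : Function.Bijective (assemble : TDec n → PartialAut (n + 1)) := by
  constructor
  · rintro (⟨⟩ | (⟨d, e, z⟩ | ⟨s, z, w⟩)) (⟨⟩ | (⟨d', e', z'⟩ | ⟨s', z', w'⟩)) h <;>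
      simp only [assemble] at h
    · rfl
    · -- mk0 = mk1
      exfalso
      have h1 := congrArg (fun t => t.toFun [d']) h
      try dsimp only at h1
      rw [mk1_single, if_pos rfl] at h1
      simp only [show ([d'] : List Bool) = d' :: [] from rfl, mk0_child] at h1
      cases h1
    · exfalso
      have h1 := congrArg (fun t => t.toFun [false]) h
      try dsimp only at h1
      rw [mk2_single] at h1
      simp only [show ([false] : List Bool) = false :: [] from rfl, mk0_child] at h1
      cases h1
    · exfalso
      have h1 := congrArg (fun t => t.toFun [d]) h
      try dsimp only at h1
      rw [mk1_single, if_pos rfl] at h1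
      simp only [show ([d] : List Bool) = d :: [] from rfl, mk0_child] at h1
      cases h1
    · obtain ⟨rfl, rfl, rfl⟩ := mk1_toFun_inj h
      rfl
    · -- mk1 = mk2 : impossible, evaluate at the undefined child of mk1
      exfalso
      have h1 := congrArg (fun t => t.toFun [!d]) h
      try dsimp only at h1
      rw [mk1_single, if_neg (by cases d <;> simp), mk2_single] at h1
      cases h1
    · exfalso
      have h1 := congrArg (fun t => t.toFun [false]) h
      try dsimp only at h1
      rw [mk2_single] at h1
      simp only [show ([false] : List Bool) = false :: [] from rfl, mk0_child] at h1
      cases h1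
    · exfalso
      have h1 := congrArg (fun t => t.toFun [!d']) h
      try dsimp only at h1
      rw [mk1_single, if_neg (by cases d' <;> simp), mk2_single] at h1
      cases h1
    · obtain ⟨rfl, rfl, rfl⟩ := mk2_toFun_inj h
      rfl
  · intro x
    cases hf : x.toFun [false] with
    | none =>
        cases ht : x.toFun [true] with
        | none =>
            refine ⟨Sum.inl (), ?_⟩
            simp only [assemble]
            apply toFun_ext_children
            intro c u
            rw [mk0_child]
            cases c
            · exact (dom_cons hf).symm
            · exact (dom_cons ht).symm
        | some wt =>
            obtain ⟨e, rfl⟩ := val_one ht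
            refine ⟨Sum.inr (Sum.inl (true, e, restr x true e ht)), ?_⟩
            simp only [assemble]
            symm
            apply toFun_ext_children
            intro c u
            rw [mk1_child]
            cases c
            · rw [if_neg (by simp)]
              exact dom_cons hf
            · rw [if_pos rfl, restr_toFun]
              cases hx : x.toFun (true :: u) with
              | none => rfl
              | some w =>
                  obtain ⟨d', v, hd', rfl⟩ := head_map hx
                  rw [ht] at hd'
                  have : d' = e := by simpa using hd'.symm
                  subst this
                  rfl
    | some wf =>
        obtain ⟨e, rfl⟩ := val_one hf
        cases ht : x.toFun [true] with
        | none =>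
            refine ⟨Sum.inr (Sum.inl (false, e, restr x false e hf)), ?_⟩
            simp only [assemble]
            symm
            apply toFun_ext_children
            intro c u
            rw [mk1_child]
            cases c
            · rw [if_pos rfl, restr_toFun]
              cases hx : x.toFun (false :: u) with
              | none => rfl
              | some w =>
                  obtain ⟨d', v, hd', rfl⟩ := head_map hx
                  rw [hf] at hd'
                  have : d' = e := by simpa using hd'.symm
                  subst this
                  rfl
            · rw [if_neg (by simp)]
              exact dom_cons ht
        | some wt =>
            obtain ⟨e', rfl⟩ := val_one ht
            have hee : e' = !e := by
              by_contra hc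
              have : e' = e := by cases e <;> cases e' <;> simp_all
              subst this
              have := x.inj [false] [true] [e'] hf ht
              cases this
            subst hee
            -- x = mk2 e (restr x false e) (restr x true !e)
            refine ⟨Sum.inr (Sum.inr (e, restr x false e hf, restr x true (!e) ht)), ?_⟩
            simp only [assemble]
            symm
            apply toFun_ext_children
            intro c u
            rw [mk2_child]
            cases c
            · simp only [Bool.cond_false, restr_toFun]
              cases hx : x.toFun (false :: u) with
              | none => rfl
              | some w =>
                  obtain ⟨d', v, hd', rfl⟩ := head_map hx
                  rw [hf] at hd'
                  have : d' = e := by simpa using hd'.symm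
                  subst this
                  simp
            · simp only [Bool.cond_true, restr_toFun]
              cases hx : x.toFun (true :: u) with
              | none => rfl
              | some w =>
                  obtain ⟨d', v, hd', rfl⟩ := head_map hx
                  rw [ht] at hd'
                  have : d' = !e := by simpa using hd'.symm
                  subst this
                  simp

/-- Master summation formula over `PartialAut (n+1)`. -/
theorem masterSum (G : PartialAut (n + 1) → ℕ) :
    ∑ x : PartialAut (n + 1), G x
      = G mk0 + ((∑ d : Bool, ∑ e : Bool, ∑ z : PartialAut n, G (mk1 d e z))
        + (∑ s : Bool, ∑ z : PartialAut n, ∑ w : PartialAut n, G (mk2 s z w))) := by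
  rw [← Fintype.sum_bijective assemble assemble_bijective _ G (fun t => rfl)]
  rw [Fintype.sum_sum_type, Fintype.sum_sum_type]
  simp only [Fintype.sum_prod_type]
  rfl

end PartialAut
namespace PartialAut

variable {n : ℕ}

/-! ### Payoff values on constructors -/

theorem payoff_mk0 (c d : Bool) (F : PartialAut n → ℕ) :
    payoff (mk0 : PartialAut (n + 1)) c d F = 0 := by
  unfold payoff
  rw [dif_neg]
  intro h
  rw [show ([c] : List Bool) = c :: [] from rfl, mk0_child] at h
  cases h

theorem payoff_mk1 (d' e' : Bool) (z : PartialAut n) (c d : Bool) (F : PartialAut n → ℕ) :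
    payoff (mk1 d' e' z) c d F = if c = d' ∧ e' = d then F z else 0 := by
  by_cases h1 : c = d'
  · subst h1
    by_cases h2 : e' = d
    · subst h2
      have hc : (mk1 c e' z).toFun [c] = some [e'] := by rw [mk1_single, if_pos rfl]
      unfold payoff
      rw [dif_pos hc, if_pos ⟨rfl, rfl⟩, restr_mk1]
    · unfold payoff
      rw [dif_neg, if_neg (by tauto)]
      rw [mk1_single, if_pos rfl]
      intro hcon
      exact h2 (by simpa using hcon)
  · unfold payoff
    rw [dif_neg, if_neg (by tauto)]
    rw [mk1_single, if_neg h1]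
    intro hcon
    cases hcon

theorem payoff_mk2 (s : Bool) (z w : PartialAut n) (c d : Bool) (F : PartialAut n → ℕ) :
    payoff (mk2 s z w) c d F = if xor c s = d then F (cond c w z) else 0 := by
  by_cases h1 : xor c s = d
  · have hc : (mk2 s z w).toFun [c] = some [d] := by rw [mk2_single, h1]
    unfold payoff
    rw [dif_pos hc, if_pos h1, restr_mk2]
  · unfold payoff
    rw [dif_neg, if_neg h1]
    rw [mk2_single]
    intro hcon
    exact h1 (by simpa using hcon)

theorem payoff2_mk0 (c d : Bool) (F2 : PartialAut n → PartialAut n → ℕ) :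
    payoff2 (mk0 : PartialAut (n + 1)) c d F2 = 0 := by
  unfold payoff2
  rw [dif_neg]
  rintro ⟨h, -⟩
  rw [show ([c] : List Bool) = c :: [] from rfl, mk0_child] at h
  cases h

theorem payoff2_mk1 (d' e' : Bool) (z : PartialAut n) (c d : Bool)
    (F2 : PartialAut n → PartialAut n → ℕ) :
    payoff2 (mk1 d' e' z) c d F2 = 0 := by
  unfold payoff2
  rw [dif_neg]
  rintro ⟨h1, h2⟩
  rw [mk1_single] at h1 h2
  by_cases hc : c = d'
  · rw [if_neg (by cases c <;> cases d' <;> simp_all)] at h2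
    cases h2
  · rw [if_neg hc] at h1
    cases h1

theorem payoff2_mk2 (s : Bool) (z w : PartialAut n) (c d : Bool)
    (F2 : PartialAut n → PartialAut n → ℕ) :
    payoff2 (mk2 s z w) c d F2
      = if xor c s = d then F2 (cond c w z) (cond (!c) w z) else 0 := by
  by_cases h1 : xor c s = d
  · have hc : (mk2 s z w).toFun [c] = some [d] := by rw [mk2_single, h1]
    have hc2 : (mk2 s z w).toFun [!c] = some [!d] := by
      rw [mk2_single]
      subst h1
      cases c <;> cases s <;> rfl
    unfold payoff2
    rw [dif_pos ⟨hc, hc2⟩, if_pos h1, restr_mk2, restr_mk2]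
  · unfold payoff2
    rw [dif_neg, if_neg h1]
    rintro ⟨hcon, -⟩
    rw [mk2_single] at hcon
    exact h1 (by simpa using hcon)

/-! ### The three counting lemmas -/

theorem Nn_eq_card : Nn n = Fintype.card (PartialAut n) := Nat.card_eq_fintype_card

theorem Nn_succ : Nn (n + 1) = 1 + 4 * Nn n + 2 * (Nn n * Nn n) := by
  have h := masterSum (n := n) (fun _ => (1 : ℕ))
  have hcard : ∑ _x : PartialAut (n + 1), (1 : ℕ) = Fintype.card (PartialAut (n + 1)) := by
    simp
  rw [hcard] at h
  simp only [Finset.sum_const, Finset.card_univ, smul_eq_mul, mul_one,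
    Fintype.sum_bool, Fintype.card_bool] at h
  rw [Nn_eq_card, Nn_eq_card, h]
  ring

theorem sum_payoff (c d : Bool) (F : PartialAut n → ℕ) :
    ∑ x : PartialAut (n + 1), payoff x c d F = (1 + Nn n) * ∑ z : PartialAut n, F z := by
  rw [masterSum (fun x => payoff x c d F)]
  simp only [payoff_mk0, payoff_mk1, payoff_mk2, Nn_eq_card]
  cases c <;> cases d <;>
    simp [Fintype.sum_bool, Finset.sum_const, Finset.card_univ, smul_eq_mul,
      Finset.mul_sum] <;>
    (rw [← Finset.sum_add_distrib]; exact Finset.sum_congr rfl fun x _ => by ring)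

theorem sum_payoff2 (c d : Bool) (F2 : PartialAut n → PartialAut n → ℕ) :
    ∑ x : PartialAut (n + 1), payoff2 x c d F2
      = ∑ z : PartialAut n, ∑ w : PartialAut n, F2 z w := by
  rw [masterSum (fun x => payoff2 x c d F2)]
  simp only [payoff2_mk0, payoff2_mk1, payoff2_mk2]
  cases c <;> cases d <;>
    simp [Fintype.sum_bool] <;>
    exact Finset.sum_comm

end PartialAut
namespace PartialAut

variable {n : ℕ}

/-! ### Iterated sums over tuples -/

/-- `Tsum m k F = ∑_{x₁,…,x_k ∈ P_m} F (x₁ ⋯ x_k)`. -/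
noncomputable def Tsum (m : ℕ) : ℕ → (PartialAut m → ℕ) → ℕ
  | 0, F => F 1
  | k + 1, F => ∑ x : PartialAut m, Tsum m k (fun p => F (x * p))

@[simp] theorem Tsum_zero_eq (m : ℕ) (F : PartialAut m → ℕ) : Tsum m 0 F = F 1 := rfl

theorem Tsum_succ_eq (m k : ℕ) (F : PartialAut m → ℕ) :
    Tsum m (k + 1) F = ∑ x : PartialAut m, Tsum m k (fun p => F (x * p)) := rfl

theorem Tsum_congr {m k : ℕ} {F G : PartialAut m → ℕ} (h : ∀ y, F y = G y) :
    Tsum m k F = Tsum m k G := by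
  induction k generalizing F G with
  | zero => exact h 1
  | succ k ih =>
      rw [Tsum_succ_eq, Tsum_succ_eq]
      exact Finset.sum_congr rfl fun x _ => ih fun y => h (x * y)

theorem Tsum_one_eq (m : ℕ) (F : PartialAut m → ℕ) : Tsum m 1 F = ∑ x : PartialAut m, F x := by
  rw [Tsum_succ_eq]
  exact Finset.sum_congr rfl fun x _ => by rw [Tsum_zero_eq, mul_one]

theorem Tsum_zero_fun (m k : ℕ) : Tsum m k (fun _ => 0) = 0 := by
  induction k with
  | zero => rfl
  | succ k ih =>
      rw [Tsum_succ_eq]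
      apply Finset.sum_eq_zero
      intro x _
      exact ih

theorem Tsum_add (m k : ℕ) (F G : PartialAut m → ℕ) :
    Tsum m k (fun y => F y + G y) = Tsum m k F + Tsum m k G := by
  induction k generalizing F G with
  | zero => rfl
  | succ k ih =>
      rw [Tsum_succ_eq, Tsum_succ_eq, Tsum_succ_eq, ← Finset.sum_add_distrib]
      exact Finset.sum_congr rfl fun x _ => ih _ _

theorem Tsum_const_mul (m k : ℕ) (a : ℕ) (F : PartialAut m → ℕ) :
    Tsum m k (fun y => a * F y) = a * Tsum m k F := by
  induction k generalizing F with
  | zero => rfl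
  | succ k ih =>
      rw [Tsum_succ_eq, Tsum_succ_eq, Finset.mul_sum]
      exact Finset.sum_congr rfl fun x _ => ih _

theorem Tsum_sum {γ : Type*} [Fintype γ] (m k : ℕ) (G : γ → PartialAut m → ℕ) :
    Tsum m k (fun p => ∑ w : γ, G w p) = ∑ w : γ, Tsum m k (G w) := by
  induction k generalizing G with
  | zero => rfl
  | succ k ih =>
      rw [Tsum_succ_eq]
      rw [show (∑ w : γ, Tsum m (k+1) (G w))
          = ∑ w : γ, ∑ x : PartialAut m, Tsum m k (fun p => G w (x * p)) from
        Finset.sum_congr rfl fun w _ => Tsum_succ_eq m k (G w), Finset.sum_comm]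
      exact Finset.sum_congr rfl fun x _ => ih _

theorem pairTsum (m : ℕ) : ∀ (a b : ℕ) (F : PartialAut m → ℕ),
    Tsum m a (fun p => Tsum m b (fun q => F (p * q))) = Tsum m (a + b) F := by
  intro a
  induction a with
  | zero =>
      intro b F
      rw [Nat.zero_add, Tsum_zero_eq]
      exact Tsum_congr fun y => by rw [one_mul]
  | succ a ih =>
      intro b F
      rw [Nat.succ_add, Tsum_succ_eq, Tsum_succ_eq]
      refine Finset.sum_congr rfl fun x _ => ?_
      rw [← ih b (fun r => F (x * r))]
      exact Tsum_congr fun p => Tsum_congr fun q => by rw [mul_assoc]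

/-! ### Commuting `Tsum` with payoffs -/

theorem Tsum_payoff (m k : ℕ) (x : PartialAut (n + 1)) (c d : Bool)
    (H : PartialAut m → PartialAut n → ℕ) :
    Tsum m k (fun p => payoff x c d (fun q => H p q))
      = payoff x c d (fun q => Tsum m k (fun p => H p q)) := by
  unfold payoff
  split
  · rfl
  · exact Tsum_zero_fun m k

theorem Tsum_payoff2 (m k : ℕ) (x : PartialAut (n + 1)) (c d : Bool)
    (H : PartialAut m → PartialAut n → PartialAut n → ℕ) :
    Tsum m k (fun p => payoff2 x c d (fun q q' => H p q q'))
      = payoff2 x c d (fun q q' => Tsum m k (fun p => H p q q')) := by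
  unfold payoff2
  split
  · rfl
  · exact Tsum_zero_fun m k

theorem payoff_const_mul (x : PartialAut (n + 1)) (c d : Bool) (a : ℕ)
    (F : PartialAut n → ℕ) :
    payoff x c d (fun q => a * F q) = a * payoff x c d F := by
  unfold payoff
  split
  · rfl
  · rw [Nat.mul_zero]

theorem payoff2_const_mul (x : PartialAut (n + 1)) (c d : Bool) (a : ℕ)
    (F2 : PartialAut n → PartialAut n → ℕ) :
    payoff2 x c d (fun q q' => a * F2 q q') = a * payoff2 x c d F2 := by
  unfold payoff2
  split
  · rfl
  · rw [Nat.mul_zero]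

/-! ### Multiplicativity of payoffs -/

theorem payoff_mul (x y : PartialAut (n + 1)) (c e : Bool) (F : PartialAut n → ℕ) :
    payoff (x * y) c e F
      = ∑ d : Bool, payoff x c d (fun p => payoff y d e (fun q => F (p * q))) := by
  rw [Fintype.sum_bool]
  cases hx : x.toFun [c] with
  | none =>
      have hxy : (x * y).toFun [c] = none := mul_none hx
      unfold payoff
      rw [dif_neg (by rw [hxy]; intro h; cases h),
        dif_neg (by rw [hx]; intro h; cases h),
        dif_neg (by rw [hx]; intro h; cases h)]
  | some w =>
      obtain ⟨d₀, rfl⟩ := val_one hx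
      have hbase : (x * y).toFun [c] = y.toFun [d₀] := by
        rw [mul_toFun, hx, Option.bind_some]
      cases hy : y.toFun [d₀] with
      | none =>
          have hxy : (x * y).toFun [c] = none := by rw [hbase, hy]
          have hz : ∀ d : Bool, payoff x c d (fun p => payoff y d e (fun q => F (p * q))) = 0 := by
            intro d
            unfold payoff
            by_cases hd : d = d₀
            · subst hd
              rw [dif_pos hx]
              dsimp only
              rw [dif_neg (by rw [hy]; intro h; cases h)]
            · rw [dif_neg (by rw [hx]; intro h; exact hd (by simpa using h.symm))]
          rw [hz true, hz false]
          unfold payoff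
          rw [dif_neg (by rw [hxy]; intro h; cases h)]
      | some w2 =>
          obtain ⟨e₀, rfl⟩ := val_one hy
          have hxy : (x * y).toFun [c] = some [e₀] := by rw [hbase, hy]
          have hterm : ∀ d : Bool, d ≠ d₀ →
              payoff x c d (fun p => payoff y d e (fun q => F (p * q))) = 0 := by
            intro d hd
            unfold payoff
            rw [dif_neg (by rw [hx]; intro h; exact hd (by simpa using h.symm))]
          have hterm₀ : payoff x c d₀ (fun p => payoff y d₀ e (fun q => F (p * q)))
              = payoff (x * y) c e F := by
            unfold payoff
            rw [dif_pos hx]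
            dsimp only
            by_cases he : e₀ = e
            · subst he
              rw [dif_pos hy, dif_pos hxy]
              have := restr_mul hx hy
              rw [show restr (x * y) c e₀ hxy = restr (x*y) c e₀ (mul_child hx hy) from rfl,
                this]
            · rw [dif_neg (by rw [hy]; intro h; exact he (by simpa using h)),
                dif_neg (by rw [hxy]; intro h; exact he (by simpa using h))]
          cases hd₀ : d₀
          · subst hd₀
            rw [hterm true (by simp), hterm₀]
            omega
          · subst hd₀
            rw [hterm false (by simp), hterm₀]
            omega

theorem payoff2_mul (x y : PartialAut (n + 1)) (c e : Bool)
    (F2 : PartialAut n → PartialAut n → ℕ) :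
    payoff2 (x * y) c e F2
      = ∑ d : Bool, payoff2 x c d
          (fun p p' => payoff2 y d e (fun q q' => F2 (p * q) (p' * q'))) := by
  rw [Fintype.sum_bool]
  cases hx : x.toFun [c] with
  | none =>
      have hxy : (x * y).toFun [c] = none := mul_none hx
      unfold payoff2
      rw [dif_neg (by rintro ⟨h, -⟩; rw [hxy] at h; cases h),
        dif_neg (by rintro ⟨h, -⟩; rw [hx] at h; cases h),
        dif_neg (by rintro ⟨h, -⟩; rw [hx] at h; cases h)]
  | some w =>
      obtain ⟨d₀, rfl⟩ := val_one hx
      cases hx' : x.toFun [!c] with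
      | none =>
          have hxy : (x * y).toFun [!c] = none := mul_none hx'
          unfold payoff2
          rw [dif_neg (by rintro ⟨-, h⟩; rw [hxy] at h; cases h),
            dif_neg (by rintro ⟨-, h⟩; rw [hx'] at h; cases h),
            dif_neg (by rintro ⟨-, h⟩; rw [hx'] at h; cases h)]
      | some w' =>
          obtain ⟨d₁, rfl⟩ := val_one hx'
          have hd₁ : d₁ = !d₀ := by
            by_contra hcon
            have hdd : d₁ = d₀ := by revert hcon; cases d₁ <;> cases d₀ <;> decide
            subst hdd
            have hinj := x.inj [c] [!c] [d₁] hx hx'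
            have hfalse : c = !c := by simpa using hinj
            cases c <;> simp at hfalse
          subst hd₁
          -- the only potentially nonzero term is d = d₀
          have hterm : ∀ d : Bool, d ≠ d₀ →
              payoff2 x c d
                (fun p p' => payoff2 y d e (fun q q' => F2 (p * q) (p' * q'))) = 0 := by
            intro d hd
            unfold payoff2
            rw [dif_neg (by rintro ⟨h, -⟩; rw [hx] at h; exact hd (by simpa using h.symm))]
          have hbase : (x * y).toFun [c] = y.toFun [d₀] := by
            rw [mul_toFun, hx, Option.bind_some]
          have hbase' : (x * y).toFun [!c] = y.toFun [!d₀] := by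
            rw [mul_toFun, hx', Option.bind_some]
          have hterm₀ : payoff2 x c d₀
              (fun p p' => payoff2 y d₀ e (fun q q' => F2 (p * q) (p' * q')))
              = payoff2 (x * y) c e F2 := by
            unfold payoff2
            rw [dif_pos ⟨hx, hx'⟩]
            dsimp only
            by_cases hcond : y.toFun [d₀] = some [e] ∧ y.toFun [!d₀] = some [!e]
            · rw [dif_pos hcond,
                dif_pos (⟨by rw [hbase, hcond.1], by rw [hbase', hcond.2]⟩ :
                  (x * y).toFun [c] = some [e] ∧ (x * y).toFun [!c] = some [!e])]
              have e1 := restr_mul hx hcond.1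
              have e2 := restr_mul hx' hcond.2
              rw [show restr (x * y) c e (by rw [hbase, hcond.1]) =
                    restr (x*y) c e (mul_child hx hcond.1) from rfl, e1,
                show restr (x * y) (!c) (!e) (by rw [hbase', hcond.2]) =
                    restr (x*y) (!c) (!e) (mul_child hx' hcond.2) from rfl, e2]
            · rw [dif_neg hcond, dif_neg (by
                rintro ⟨h1, h2⟩
                rw [hbase] at h1
                rw [hbase'] at h2
                exact hcond ⟨h1, h2⟩)]
          cases hd₀ : d₀
          · subst hd₀
            rw [hterm true (by simp), hterm₀]
            omega
          · subst hd₀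
            rw [hterm false (by simp), hterm₀]
            omega

end PartialAut
namespace PartialAut

variable {n : ℕ}

/-! ### The transfer identities -/

theorem transfer1 : ∀ (k : ℕ) (c d : Bool) (F : PartialAut n → ℕ),
    Tsum (n + 1) (k + 1) (fun y => payoff y c d F)
      = 2 ^ k * (1 + Nn n) ^ (k + 1) * Tsum n (k + 1) F := by
  intro k
  induction k with
  | zero =>
      intro c d F
      rw [Tsum_one_eq, sum_payoff, Tsum_one_eq]
      ring
  | succ k ih =>
      intro c e F
      rw [Tsum_succ_eq]
      have hpt : ∀ x : PartialAut (n + 1),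
          Tsum (n + 1) (k + 1) (fun p => payoff (x * p) c e F)
            = ∑ d : Bool, (2 ^ k * (1 + Nn n) ^ (k + 1))
                * payoff x c d (fun q => Tsum n (k + 1) (fun r => F (q * r))) := by
        intro x
        rw [show (fun p => payoff (x * p) c e F)
            = fun p => ∑ d : Bool, payoff x c d (fun q => payoff p d e (fun r => F (q * r)))
          from funext fun p => payoff_mul x p c e F]
        rw [Tsum_sum]
        refine Finset.sum_congr rfl fun d _ => ?_
        rw [Tsum_payoff]
        rw [show (fun q => Tsum (n + 1) (k + 1) (fun p => payoff p d e (fun r => F (q * r))))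
            = fun q => 2 ^ k * (1 + Nn n) ^ (k + 1) * Tsum n (k + 1) (fun r => F (q * r))
          from funext fun q => ih d e (fun r => F (q * r))]
        rw [payoff_const_mul]
      rw [Finset.sum_congr rfl fun x _ => hpt x, Finset.sum_comm]
      have hin : ∀ d : Bool,
          (∑ x : PartialAut (n + 1), (2 ^ k * (1 + Nn n) ^ (k + 1))
              * payoff x c d (fun q => Tsum n (k + 1) (fun r => F (q * r))))
            = 2 ^ k * (1 + Nn n) ^ (k + 1)
              * ((1 + Nn n) * Tsum n (k + 2) F) := by
        intro d
        rw [← Finset.mul_sum, sum_payoff, Tsum_succ_eq]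
      rw [Finset.sum_congr rfl fun d _ => hin d]
      simp only [Finset.sum_const, Finset.card_univ, Fintype.card_bool, smul_eq_mul]
      ring

theorem transfer2 : ∀ (k : ℕ) (c d : Bool) (F2 : PartialAut n → PartialAut n → ℕ),
    Tsum (n + 1) (k + 1) (fun y => payoff2 y c d F2)
      = 2 ^ k * Tsum n (k + 1) (fun p => Tsum n (k + 1) (fun q => F2 p q)) := by
  intro k
  induction k with
  | zero =>
      intro c d F2
      rw [Tsum_one_eq, sum_payoff2, pow_zero, one_mul, Tsum_one_eq]
      exact Finset.sum_congr rfl fun z _ => (Tsum_one_eq n (fun q => F2 z q)).symm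
  | succ k ih =>
      intro c e F2
      rw [Tsum_succ_eq]
      have hpt : ∀ x : PartialAut (n + 1),
          Tsum (n + 1) (k + 1) (fun p => payoff2 (x * p) c e F2)
            = ∑ d : Bool, (2 ^ k)
                * payoff2 x c d (fun q q' =>
                    Tsum n (k + 1) (fun p => Tsum n (k + 1) (fun p' => F2 (q * p) (q' * p')))) := by
        intro x
        rw [show (fun p => payoff2 (x * p) c e F2)
            = fun p => ∑ d : Bool, payoff2 x c d
                (fun q q' => payoff2 p d e (fun r r' => F2 (q * r) (q' * r')))
          from funext fun p => payoff2_mul x p c e F2]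
        rw [Tsum_sum]
        refine Finset.sum_congr rfl fun d _ => ?_
        rw [Tsum_payoff2]
        rw [show (fun q q' => Tsum (n + 1) (k + 1)
              (fun p => payoff2 p d e (fun r r' => F2 (q * r) (q' * r'))))
            = fun q q' => 2 ^ k
                * Tsum n (k + 1) (fun p => Tsum n (k + 1) (fun p' => F2 (q * p) (q' * p')))
          from funext fun q => funext fun q' => ih d e (fun r r' => F2 (q * r) (q' * r'))]
        rw [payoff2_const_mul]
      rw [Finset.sum_congr rfl fun x _ => hpt x, Finset.sum_comm]
      have hin : ∀ d : Bool,
          (∑ x : PartialAut (n + 1), (2 ^ k)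
              * payoff2 x c d (fun q q' =>
                  Tsum n (k + 1) (fun p => Tsum n (k + 1) (fun p' => F2 (q * p) (q' * p')))))
            = 2 ^ k * Tsum n (k + 2) (fun p => Tsum n (k + 2) (fun q => F2 p q)) := by
        intro d
        rw [← Finset.mul_sum, sum_payoff2]
        congr 1
        -- ∑ z ∑ w Tsum (fun p => Tsum (fun p' => F2 (z*p) (w*p')))
        --   = Tsum (k+2) (fun p => Tsum (k+2) (fun q => F2 p q))
        rw [Tsum_succ_eq]
        refine Finset.sum_congr rfl fun z _ => ?_
        rw [← Tsum_sum]
        refine Tsum_congr fun p => ?_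
        rw [Tsum_succ_eq]
      rw [Finset.sum_congr rfl fun d _ => hin d]
      simp only [Finset.sum_const, Finset.card_univ, Fintype.card_bool, smul_eq_mul]
      ring

/-! ### The recursion for the total ultimate ranks of products -/

theorem Tsum_index_congr {m : ℕ} {i j : ℕ} (h : i = j) (F : PartialAut m → ℕ) :
    Tsum m i F = Tsum m j F := by rw [h]

theorem Mrec (k : ℕ) :
    Tsum (n + 1) (k + 1) urk
      = 2 ^ (k + 1) * (1 + Nn n) ^ (k + 1) * Tsum n (k + 1) urk
        + 2 ^ (k + 1) * Tsum n ((k + 1) + (k + 1)) urk := by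
  rw [Tsum_congr (fun y => urk_split y)]
  rw [show (fun y : PartialAut (n + 1) =>
        (payoff y false false urk + payoff2 y false true fun p q => urk (p * q))
          + (payoff y true true urk + payoff2 y true false fun p q => urk (p * q)))
      = fun y =>
        ((fun y => payoff y false false urk) y
            + (fun y => payoff2 y false true fun p q => urk (p * q)) y)
          + ((fun y => payoff y true true urk) y
            + (fun y => payoff2 y true false fun p q => urk (p * q)) y) from rfl]
  rw [Tsum_add, Tsum_add, Tsum_add]
  rw [transfer1 k false false urk, transfer1 k true true urk,
    transfer2 k false true (fun p q => urk (p * q)),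
    transfer2 k true false (fun p q => urk (p * q))]
  rw [show (fun p => Tsum n (k + 1) fun q => (fun p q => urk (p * q)) p q)
      = fun p => Tsum n (k + 1) fun q => urk (p * q) from rfl]
  rw [pairTsum n (k + 1) (k + 1) urk]
  ring

/-! ### Base level -/

theorem subsingleton_zero (x y : PartialAut 0) : x = y := by
  apply ext'
  funext l
  cases l with
  | nil => rw [x.root_map, y.root_map]
  | cons c u =>
      rw [toFun_eq_none (by simp), toFun_eq_none (by simp)]

theorem survSet_zero (x : PartialAut 0) : survSet x = {[]} := by
  ext l
  constructor
  · rintro ⟨hlen, -⟩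
    exact List.length_eq_zero_iff.mp hlen
  · rintro rfl
    refine ⟨rfl, fun m _ => ?_⟩
    rw [mem_dom_iff, (x ^ m).root_map]
    intro h; cases h

theorem urk_zero_level (x : PartialAut 0) : urk x = 1 := by
  unfold urk
  rw [Nat.card_coe_set_eq, survSet_zero, Set.ncard_singleton]

theorem Nn_zero : Nn 0 = 1 := by
  haveI : Unique (PartialAut 0) := ⟨⟨1⟩, fun x => subsingleton_zero x 1⟩
  exact Nat.card_unique

theorem Tsum_zero_level (k : ℕ) : Tsum 0 k urk = 1 := by
  induction k with
  | zero => exact urk_zero_level 1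
  | succ k ih =>
      haveI : Unique (PartialAut 0) := ⟨⟨1⟩, fun x => subsingleton_zero x 1⟩
      rw [Tsum_succ_eq]
      have : ∀ x : PartialAut 0, Tsum 0 k (fun p => urk (x * p)) = 1 := by
        intro x
        rw [Tsum_congr (fun p => by rw [subsingleton_zero (x * p) p])]
        exact ih
      rw [Finset.sum_congr rfl fun x _ => this x]
      simp

/-! ### The key invariant -/

theorem key_invariant : ∀ m k : ℕ,
    2 ^ (k + 1) * Tsum m ((k + 1) + (k + 1)) urk
      ≤ (1 + Nn m) ^ (k + 1) * Tsum m (k + 1) urk := by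
  intro m
  induction m with
  | zero =>
      intro k
      rw [Tsum_zero_level, Tsum_zero_level, Nn_zero]
  | succ m ih =>
      intro k
      have hN : 1 + Nn (m + 1) = 2 * ((1 + Nn m) * (1 + Nn m)) := by
        rw [Nn_succ]; ring
      set x := 1 + Nn m with hx
      set A := Tsum m (k + 1) urk with hA
      set B := Tsum m ((k + 1) + (k + 1)) urk with hB
      set C := Tsum m (((2 * k + 1) + 1) + ((2 * k + 1) + 1)) urk with hC
      -- rewrite both sides using the recursion
      have h1 : Tsum (m + 1) (k + 1) urk = 2 ^ (k + 1) * x ^ (k + 1) * A + 2 ^ (k + 1) * B :=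
        Mrec k
      have hidx : (k + 1) + (k + 1) = (2 * k + 1) + 1 := by ring
      have h2 : Tsum (m + 1) ((k + 1) + (k + 1)) urk
          = 2 ^ ((2 * k + 1) + 1) * x ^ ((2 * k + 1) + 1) * B + 2 ^ ((2 * k + 1) + 1) * C := by
        rw [Tsum_index_congr hidx urk, Mrec (2 * k + 1)]
        rw [Tsum_index_congr hidx.symm urk]
      have I₁ : 2 ^ (k + 1) * B ≤ x ^ (k + 1) * A := ih k
      have I₂ : 2 ^ ((2 * k + 1) + 1) * C ≤ x ^ ((2 * k + 1) + 1) * B := by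
        have := ih (2 * k + 1)
        rwa [Tsum_index_congr hidx.symm urk] at this
      rw [h1, h2, hN]
      set a := (2 : ℕ) ^ (k + 1) with ha
      set b := x ^ (k + 1) with hb
      have hpa : (2 : ℕ) ^ ((2 * k + 1) + 1) = a * a := by
        rw [ha, ← pow_add]; ring_nf
      have hpb : x ^ ((2 * k + 1) + 1) = b * b := by
        rw [hb, ← pow_add]; ring_nf
      have hpab : (2 * (x * x)) ^ (k + 1) = a * (b * b) := by
        rw [ha, hb, mul_pow, mul_pow, ← pow_add]
      rw [hpa, hpb, hpab]
      rw [hpa, hpb] at I₂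
      have ha1 : 1 ≤ a := Nat.one_le_two_pow
      -- goal : a * (a*a*(b*b)*B + a*a*C) ≤ a*(b*b) * (a*b*A + a*B)
      have e1 : a * a * (b * b) * (a * B) ≤ a * a * (b * b) * (b * A) :=
        Nat.mul_le_mul_left _ I₁
      have e2 : a * (a * a * C) ≤ a * (b * b * B) := Nat.mul_le_mul_left _ I₂
      have e3 : a * (b * b * B) ≤ (a * a) * (b * b * B) :=
        Nat.mul_le_mul_right _ (Nat.le_mul_of_pos_left a (by omega))
      nlinarith [e1, le_trans e2 e3]

/-! ### Conclusion -/

theorem Rn_eq_Tsum (m : ℕ) : Rn m = Tsum m 1 urk := (Tsum_one_eq m urk).symm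

end PartialAut
/-- the total ultimate rank satisfies
`R_n ≤ 3 R_{n-1} + 3 R_{n-1} N_{n-1}` for all `n ≥ 2`. -/
theorem totalUltimateRank_le (n : ℕ) (hn : 2 ≤ n) :
    Rn n ≤ 3 * Rn (n - 1) + 3 * Rn (n - 1) * Nn (n - 1) := by
  obtain ⟨m, rfl⟩ : ∃ m, n = m + 1 := ⟨n - 1, by omega⟩
  rw [Nat.add_sub_cancel]
  have h1 : Rn (m + 1)
      = 2 ^ (0 + 1) * (1 + Nn m) ^ (0 + 1) * PartialAut.Tsum m (0 + 1) urk
        + 2 ^ (0 + 1) * PartialAut.Tsum m ((0 + 1) + (0 + 1)) urk := by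
    rw [PartialAut.Rn_eq_Tsum]
    exact PartialAut.Mrec 0
  have h2 := PartialAut.key_invariant m 0
  norm_num at h1 h2
  rw [PartialAut.Rn_eq_Tsum m, h1]
  nlinarith [h2]
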